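/- arXiv:2106.00519 — 2 statements merged into one kernel-verified Lean document; each statement's English description precedes it below -/
import Mathlib

section
/- Let F : ℝ^n ⇒ ℝ^n and let (x, y) ∈ gph F. Then every L ∈ Sp* F(x, y) is contained in the graph of the limiting coderivative of F at (x, y): for every (y*, x*) ∈ L there exist sequences (x_k, y_k) ∈ gph F with (x_k, y_k) → (x, y) and vectors (u_k*, v_k*) ∈ ℝ^{2n} with (u_k*, v_k*) → (x*, −y*) such that for every k, ⟨(u_k*, v_k*), w⟩ ≤ 0 for all w ∈ T_{gph F}(x_k, y_k). -/
open Filter Topology Metric Set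
open scoped InnerProductSpace RealInnerProductSpace ENNReal NNReal

noncomputable section

namespace SCD

abbrev E (n : ℕ) := EuclideanSpace ℝ (Fin n)
abbrev E2 (n : ℕ) := WithLp 2 (E n × E n)

variable {n : ℕ}

def lp2 (n : ℕ) : E2 n ≃ₗ[ℝ] E n × E n := WithLp.linearEquiv 2 ℝ (E n × E n)
def mk2 (u v : E n) : E2 n := (lp2 n).symm (u, v)
def fst2 (z : E2 n) : E n := (lp2 n z).1
def snd2 (z : E2 n) : E n := (lp2 n z).2

instance : FiniteDimensional ℝ (E2 n) := Module.Finite.equiv (lp2 n).symm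

def tcone {H : Type*} [NormedAddCommGroup H] [NormedSpace ℝ H] (A : Set H) (z : H) : Set H :=
  {w | ∃ t : ℕ → ℝ, ∃ wk : ℕ → H, (∀ k, 0 < t k) ∧ Tendsto t atTop (𝓝 0) ∧
      Tendsto wk atTop (𝓝 w) ∧ ∀ k, z + t k • wk k ∈ A}

def gph (F : E n → Set (E n)) : Set (E2 n) := {z | snd2 z ∈ F (fst2 z)}
def projC (L : Submodule ℝ (E2 n)) : E2 n →L[ℝ] E2 n := L.subtypeL.comp (L.orthogonalProjectionOnto)
def dZ (L₁ L₂ : Submodule ℝ (E2 n)) : ℝ := ‖projC L₁ - projC L₂‖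

def Sneg (n : ℕ) : E2 n ≃ₗ[ℝ] E2 n :=
  (lp2 n).trans (((LinearEquiv.prodComm ℝ (E n) (E n)).trans
    ((LinearEquiv.neg ℝ).prodCongr (LinearEquiv.refl ℝ (E n)))).trans (lp2 n).symm)

def adjS (L : Submodule ℝ (E2 n)) : Submodule ℝ (E2 n) := Lᗮ.map (Sneg n).toLinearMap

/-- `O_F`: the set of points of `gph F` where `F` is graphically smooth of dimension `n`,
i.e. the tangent cone to the graph is an `n`-dimensional linear subspace. -/
def OF (F : E n → Set (E n)) : Set (E2 n) :=
  {z | z ∈ gph F ∧ ∃ L : Submodule ℝ (E2 n),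
    Module.finrank ℝ L = n ∧ (L : Set (E2 n)) = tcone (gph F) z}

/-- The primal generalized derivative `Sp F(x,y)`. -/
def Sp (F : E n → Set (E n)) (z : E2 n) : Set (Submodule ℝ (E2 n)) :=
  {L | Module.finrank ℝ L = n ∧ ∃ (zk : ℕ → E2 n) (Lk : ℕ → Submodule ℝ (E2 n)),
      (∀ k, zk k ∈ gph F ∧ Module.finrank ℝ (Lk k) = n ∧
        ((Lk k : Set (E2 n)) = tcone (gph F) (zk k))) ∧
      Tendsto zk atTop (𝓝 z) ∧ Tendsto (fun k => dZ (Lk k) L) atTop (𝓝 0)}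

/-- The dual generalized derivative `Sp* F(x,y)`. -/
def SpStar (F : E n → Set (E n)) (z : E2 n) : Set (Submodule ℝ (E2 n)) :=
  {L' | ∃ L ∈ Sp F z, L' = adjS L}

/-- `F` has the SCD property at `z ∈ gph F`. -/
def SCDAt (F : E n → Set (E n)) (z : E2 n) : Prop := (Sp F z).Nonempty

/-- `F` has the SCD property around `z ∈ gph F`. -/
def SCDAround (F : E n → Set (E n)) (z : E2 n) : Prop :=
  ∃ δ > (0 : ℝ), ∀ z' ∈ gph F, dist z' z < δ → SCDAt F z'

/-- `Z_n^{reg}`: the subspaces `L ∈ Z_n` such that `(y*, 0) ∈ L` implies `y* = 0`. -/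
def Znreg (n : ℕ) : Set (Submodule ℝ (E2 n)) :=
  {L | Module.finrank ℝ L = n ∧ ∀ y : E n, mk2 y 0 ∈ L → y = 0}

/-- `F` is SCD regular around `z ∈ gph F`. -/
def SCDRegularAround (F : E n → Set (E n)) (z : E2 n) : Prop :=
  SCDAround F z ∧ ∀ L ∈ SpStar F z, L ∈ Znreg n

/-- The set of values `‖y*‖` for `(y*, x*)` in some `L ∈ Sp* F(x,y)` with `‖x*‖ ≤ 1`;
its supremum is the modulus of SCD regularity. -/
def scdregSet (F : E n → Set (E n)) (z : E2 n) : Set ℝ :=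
  {r | ∃ L ∈ SpStar F z, ∃ w : E2 n, w ∈ L ∧ ‖snd2 w‖ ≤ 1 ∧ r = ‖fst2 w‖}

/-- The modulus of SCD regularity `scd reg F(x,y)`. -/
def scdreg (F : E n → Set (E n)) (z : E2 n) : ℝ := sSup (scdregSet F z)

/-- The graph of the outer limiting graphical derivative `D^♯F(x̄,ȳ)`. -/
def DsharpG (F : E n → Set (E n)) (z : E2 n) : Set (E2 n) :=
  {w | ∃ (zk : ℕ → E2 n) (wk : ℕ → E2 n),
    (∀ k, zk k ∈ gph F ∧ wk k ∈ tcone (gph F) (zk k)) ∧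
    Tendsto zk atTop (𝓝 z) ∧ Tendsto wk atTop (𝓝 w)}

/-- The regular (Fréchet) normal cone: the polar of the tangent cone. -/
def regN (A : Set (E2 n)) (z : E2 n) : Set (E2 n) := {w | ∀ v ∈ tcone A z, ⟪w, v⟫_ℝ ≤ 0}

/-- The limiting (Mordukhovich) normal cone. -/
def limN (A : Set (E2 n)) (z : E2 n) : Set (E2 n) :=
  {w | ∃ (zk wk : ℕ → E2 n), (∀ k, zk k ∈ A ∧ wk k ∈ regN A (zk k)) ∧
    Tendsto zk atTop (𝓝 z) ∧ Tendsto wk atTop (𝓝 w)}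

/-- The graph of the limiting coderivative: `(y*, x*)` with `(x*, -y*)` in the limiting
normal cone to the graph. -/
def coderivG (F : E n → Set (E n)) (z : E2 n) : Set (E2 n) :=
  {w | mk2 (snd2 w) (-(fst2 w)) ∈ limN (gph F) z}

/-- The graph of the strict (paratingent) derivative `D_*F(x̄,ȳ)`. -/
def paraconeG (F : E n → Set (E n)) (z : E2 n) : Set (E2 n) :=
  {w | ∃ (t : ℕ → ℝ) (z1 z2 : ℕ → E2 n), (∀ k, 0 < t k) ∧ Tendsto t atTop (𝓝 0) ∧
    (∀ k, z1 k ∈ gph F ∧ z2 k ∈ gph F) ∧ Tendsto z1 atTop (𝓝 z) ∧ Tendsto z2 atTop (𝓝 z) ∧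
    Tendsto (fun k => (t k)⁻¹ • (z2 k - z1 k)) atTop (𝓝 w)}

/-- The B-subdifferential of `f : U → ℝ^n` at `x`. -/
def Bsub (f : E n → E n) (U : Set (E n)) (x : E n) : Set (E n →L[ℝ] E n) :=
  {A | ∃ xk : ℕ → E n, (∀ k, xk k ∈ U ∧ DifferentiableAt ℝ f (xk k)) ∧
    Tendsto xk atTop (𝓝 x) ∧ Tendsto (fun k => fderiv ℝ f (xk k)) atTop (𝓝 A)}

/-- A single-valued map `f` on `U` viewed as a set-valued map. -/
def sv (f : E n → E n) (U : Set (E n)) : E n → Set (E n) := fun x => {y | x ∈ U ∧ y = f x}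

/-- The linear map `u ↦ (u, A u)`. -/
def graphMap (A : E n →L[ℝ] E n) : E n →ₗ[ℝ] E2 n :=
  (lp2 n).symm.toLinearMap.comp (LinearMap.prod LinearMap.id A.toLinearMap)

/-- The subspace `rge(I, A) = {(u, Au) : u ∈ ℝ^n}`. -/
def rgeIA (A : E n →L[ℝ] E n) : Submodule ℝ (E2 n) := LinearMap.range (graphMap A)

/-- The linear map `p ↦ (C p, p)`. -/
def graphMapRev (C : E n →L[ℝ] E n) : E n →ₗ[ℝ] E2 n :=
  (lp2 n).symm.toLinearMap.comp (LinearMap.prod C.toLinearMap LinearMap.id)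

/-- The subspace `rge(C, I) = {(C p, p) : p ∈ ℝ^n}`. -/
def rgeCI (C : E n →L[ℝ] E n) : Submodule ℝ (E2 n) := LinearMap.range (graphMapRev C)

/-- The preimage map `F^{-1}(y)`. -/
def Finv (F : E n → Set (E n)) (y : E n) : Set (E n) := {x | y ∈ F x}

/-- Metric subregularity at `z ∈ gph F` with constant `κ`. -/
def SubregWith (F : E n → Set (E n)) (z : E2 n) (κ : ℝ) : Prop :=
  ∃ δ > (0 : ℝ), ∀ x' : E n, dist x' (fst2 z) < δ →
    EMetric.infEdist x' (Finv F (snd2 z)) ≤ ENNReal.ofReal κ * EMetric.infEdist (snd2 z) (F x')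

/-- `F` is metrically subregular at `z ∈ gph F`. -/
def SubregAt (F : E n → Set (E n)) (z : E2 n) : Prop := ∃ κ, 0 ≤ κ ∧ SubregWith F z κ

/-- The modulus of metric subregularity `subreg F(x,y)`. -/
def subregMod (F : E n → Set (E n)) (z : E2 n) : ℝ := sInf {κ | 0 ≤ κ ∧ SubregWith F z κ}

/-- `F` is strongly metrically subregular at `z ∈ gph F`. -/
def StrSubregAt (F : E n → Set (E n)) (z : E2 n) : Prop :=
  SubregAt F z ∧ ∃ δ > (0 : ℝ), ∀ x' ∈ Finv F (snd2 z), dist x' (fst2 z) < δ → x' = fst2 z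

/-- `F` is strongly metrically subregular around `zb ∈ gph F` (with finite `lsubreg`). -/
def StrSubregAround (F : E n → Set (E n)) (zb : E2 n) : Prop :=
  ∃ δ > (0 : ℝ), (∀ z ∈ gph F, dist z zb < δ → StrSubregAt F z) ∧
    ∃ c : ℝ, ∀ z ∈ gph F, dist z zb < δ → subregMod F z ≤ c

/-- `lsubreg F(x̄,ȳ)`: the limsup of `subreg F(x,y)` over graph points `(x,y) → (x̄,ȳ)`. -/
def lsubreg (F : E n → Set (E n)) (zb : E2 n) : ℝ :=
  Filter.limsup (fun z => subregMod F z) (𝓝[gph F] zb)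

/-- Metric regularity around `zb ∈ gph F` with constant `κ`. -/
def RegWith (F : E n → Set (E n)) (zb : E2 n) (κ : ℝ) : Prop :=
  ∃ δ > (0 : ℝ), ∀ x y : E n, dist x (fst2 zb) < δ → dist y (snd2 zb) < δ →
    EMetric.infEdist x (Finv F y) ≤ ENNReal.ofReal κ * EMetric.infEdist y (F x)

/-- `F` is metrically regular around `zb ∈ gph F`. -/
def MetrRegAround (F : E n → Set (E n)) (zb : E2 n) : Prop := ∃ κ, 0 ≤ κ ∧ RegWith F zb κ

/-- The modulus of metric regularity `reg F(x̄,ȳ)`. -/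
def regMod (F : E n → Set (E n)) (zb : E2 n) : ℝ := sInf {κ | 0 ≤ κ ∧ RegWith F zb κ}

/-- `F` is strongly metrically regular around `zb ∈ gph F`: metrically regular and `F⁻¹`
has a single-valued localization around `(ȳ, x̄)`. -/
def StrRegAround (F : E n → Set (E n)) (zb : E2 n) : Prop :=
  MetrRegAround F zb ∧
  ∃ (X' Y' : Set (E n)) (h : E n → E n), IsOpen X' ∧ IsOpen Y' ∧
    fst2 zb ∈ X' ∧ snd2 zb ∈ Y' ∧ h (snd2 zb) = fst2 zb ∧
    gph F ∩ {w | fst2 w ∈ X' ∧ snd2 w ∈ Y'} = {w | snd2 w ∈ Y' ∧ fst2 w = h (snd2 w)}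

/-- `F` is SCD semismooth* at `zb ∈ gph F`. -/
def SCDSemismoothAt (F : E n → Set (E n)) (zb : E2 n) : Prop :=
  SCDAround F zb ∧ ∀ ε > (0 : ℝ), ∃ δ > (0 : ℝ), ∀ z ∈ gph F, dist z zb ≤ δ →
    ∀ L ∈ SpStar F z, ∀ w : E2 n, w ∈ L →
      |⟪snd2 w, fst2 z - fst2 zb⟫_ℝ - ⟪fst2 w, snd2 z - snd2 zb⟫_ℝ| ≤ ε * ‖z - zb‖ * ‖w‖

/-- `F` is graphically Lipschitzian of dimension `n` at `zb` with transformation mapping `Φ`,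
local inverse `Ψ`, neighborhood `W`, and `K`-Lipschitz map `f : U → ℝ^n`. -/
def GraphLipWith (F : E n → Set (E n)) (zb : E2 n) (Φ Ψ : E2 n → E2 n)
    (W : Set (E2 n)) (U : Set (E n)) (f : E n → E n) (K : ℝ≥0) : Prop :=
  IsOpen W ∧ zb ∈ W ∧ ContDiffOn ℝ 1 Φ W ∧ Set.InjOn Φ W ∧ IsOpen (Φ '' W) ∧
  ContDiffOn ℝ 1 Ψ (Φ '' W) ∧ Set.LeftInvOn Ψ Φ W ∧
  IsOpen U ∧ LipschitzOnWith K f U ∧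
  Φ '' (gph F ∩ W) = {w | fst2 w ∈ U ∧ snd2 w = f (fst2 w)}

/-- `F` is graphically Lipschitzian of dimension `n` at `zb` with transformation mapping `Φ`. -/
def GraphLipAt (F : E n → Set (E n)) (zb : E2 n) (Φ : E2 n → E2 n) : Prop :=
  ∃ Ψ W U f K, GraphLipWith F zb Φ Ψ W U f K

/-- `∇̄^Φ F(x̄,ȳ)`: the `(2n)×n` matrices `Z` (as linear maps `ℝ^n → ℝ^{2n}`) with
`rge Z ∈ Sp F(x̄,ȳ)` and upper block of `∇Φ(x̄,ȳ)Z` equal to the identity. -/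
def BsubPhi (F : E n → Set (E n)) (zb : E2 n) (Φ : E2 n → E2 n) : Set (E n →L[ℝ] E2 n) :=
  {Z | LinearMap.range (Z : E n →ₗ[ℝ] E2 n) ∈ Sp F zb ∧ ∀ p, fst2 (fderiv ℝ Φ zb (Z p)) = p}

/-- A (globally) monotone set-valued map. -/
def MonoMap (T : E n → Set (E n)) : Prop :=
  ∀ x₁ y₁ x₂ y₂, y₁ ∈ T x₁ → y₂ ∈ T x₂ → 0 ≤ ⟪y₁ - y₂, x₁ - x₂⟫_ℝ

/-- `F` is locally maximally monotone at `z ∈ gph F`. -/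
def LocMaxMonoAt (F : E n → Set (E n)) (z : E2 n) : Prop :=
  ∃ X Y : Set (E n), IsOpen X ∧ IsOpen Y ∧ fst2 z ∈ X ∧ snd2 z ∈ Y ∧
    (∀ w₁ ∈ gph F ∩ {w | fst2 w ∈ X ∧ snd2 w ∈ Y},
     ∀ w₂ ∈ gph F ∩ {w | fst2 w ∈ X ∧ snd2 w ∈ Y},
       0 ≤ ⟪snd2 w₁ - snd2 w₂, fst2 w₁ - fst2 w₂⟫_ℝ) ∧
    ∀ T : E n → Set (E n), MonoMap T →
      gph F ∩ {w | fst2 w ∈ X ∧ snd2 w ∈ Y} ⊆ gph T →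
      gph F ∩ {w | fst2 w ∈ X ∧ snd2 w ∈ Y} = gph T ∩ {w | fst2 w ∈ X ∧ snd2 w ∈ Y}

/-- `F` is locally maximally hypomonotone at `z ∈ gph F`:
`γI + F` is locally maximally monotone at `(x, γx + y)` for some `γ ≥ 0`. -/
def LocMaxHypoAt (F : E n → Set (E n)) (z : E2 n) : Prop :=
  ∃ γ : ℝ, 0 ≤ γ ∧ LocMaxMonoAt (fun x => (fun y => γ • x + y) '' F x)
    (mk2 (fst2 z) (γ • fst2 z + snd2 z))

/-- A firmly nonexpansive matrix: `⟨Bv, v⟩ ≥ ‖Bv‖²` for all `v`. -/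
def FirmNonexp (B : E n →L[ℝ] E n) : Prop := ∀ v, ‖B v‖ ^ 2 ≤ ⟪B v, v⟫_ℝ


/-! If `L ∈ Sp F z` is the limit of the tangent spaces `Lₖ` to `gph F` at `zₖ → z`, then for
`v ∈ Lᗮ` the residuals `v - P_{Lₖ} v ∈ Lₖᗮ` are regular normals at `zₖ`, and they converge to
`v - P_L v = v` because `P_{Lₖ} → P_L` in operator norm. Hence `Lᗮ` lies in the limiting normal
cone, and the adjoint subspace `L*` is `Lᗮ` rotated by `(u*, v*) ↦ (-v*, u*)`, which the
coderivative convention `(y*, x*) ↦ (x*, -y*)` undoes. -/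

theorem projC_eq_starProjection (K : Submodule ℝ (E2 n)) : projC K = K.starProjection := rfl

theorem mk2_snd2_neg_fst2_Sneg (v : E2 n) :
    mk2 (snd2 (Sneg n v)) (-(fst2 (Sneg n v))) = v := by
  simp only [Sneg, mk2, fst2, snd2, LinearEquiv.trans_apply, LinearEquiv.apply_symm_apply,
    LinearEquiv.prodComm_apply, LinearEquiv.prodCongr_apply, LinearEquiv.neg_apply,
    LinearEquiv.refl_apply, Prod.fst_swap, Prod.snd_swap, neg_neg]
  exact (lp2 n).symm_apply_apply v

theorem orthogonal_subset_regN {A : Set (E2 n)} {z : E2 n} {K : Submodule ℝ (E2 n)}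
    (hK : (K : Set (E2 n)) = tcone A z) : (Kᗮ : Set (E2 n)) ⊆ regN A z := by
  intro w hw t ht
  rw [← hK] at ht
  exact (Submodule.inner_left_of_mem_orthogonal ht hw).le

theorem tendsto_projC_apply {K : ℕ → Submodule ℝ (E2 n)} {L : Submodule ℝ (E2 n)}
    (hK : Tendsto (fun k => dZ (K k) L) atTop (𝓝 0)) (v : E2 n) :
    Tendsto (fun k => projC (K k) v) atTop (𝓝 (projC L v)) := by
  rw [tendsto_iff_norm_sub_tendsto_zero]
  refine squeeze_zero (fun k => norm_nonneg _) (fun k => ?_) (by simpa using hK.mul_const ‖v‖)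
  exact (projC (K k) - projC L).le_opNorm v

theorem orthogonal_subset_limN_of_mem_Sp {F : E n → Set (E n)} {z : E2 n}
    {L : Submodule ℝ (E2 n)} (hL : L ∈ Sp F z) : (Lᗮ : Set (E2 n)) ⊆ limN (gph F) z := by
  obtain ⟨-, zk, Lk, hk, hzk, hdZ⟩ := hL
  intro v hv
  have hv_proj : projC L v = 0 := by
    rw [projC_eq_starProjection, Submodule.starProjection_apply_eq_zero_iff]
    exact hv
  refine ⟨zk, fun k => v - projC (Lk k) v, fun k => ⟨(hk k).1, ?_⟩, hzk, ?_⟩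
  · exact orthogonal_subset_regN (hk k).2.2 (Submodule.sub_starProjection_mem_orthogonal v)
  · simpa [hv_proj] using tendsto_const_nhds.sub (tendsto_projC_apply hdZ v)

theorem stmt5_general (n : ℕ) (F : E n → Set (E n)) (z : E2 n)
    (L : Submodule ℝ (E2 n)) (hL : L ∈ SpStar F z) :
    ∀ w : E2 n, w ∈ L → mk2 (snd2 w) (-(fst2 w)) ∈ limN (gph F) z := by
  obtain ⟨L₀, hL₀, rfl⟩ := hL
  rintro _ ⟨v, hv, rfl⟩
  rw [LinearEquiv.coe_coe, mk2_snd2_neg_fst2_Sneg]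
  exact orthogonal_subset_limN_of_mem_Sp hL₀ hv

theorem stmt5 (n : ℕ) (F : E n → Set (E n)) (z : E2 n) (hz : z ∈ gph F)
    (L : Submodule ℝ (E2 n)) (hL : L ∈ SpStar F z) :
    ∀ w : E2 n, w ∈ L → mk2 (snd2 w) (-(fst2 w)) ∈ limN (gph F) z :=
  stmt5_general n F z L hL

end SCD
end
end

section
/- Let G : ℝ^n ⇒ ℝ^n, let Φ : ℝ^{2n} → ℝ^{2n}, and let F : ℝ^n ⇒ ℝ^n be the mapping defined by gph F = {(x, y) : Φ(x, y) ∈ gph G}. Let (x, y) ∈ gph F be such that Φ is continuously differentiable on a neighborhood of (x, y) and the Jacobian ∇Φ(x, y) is nonsingular. Then Sp F(x, y) = {∇Φ(x, y)^{-1} L : L ∈ Sp G(Φ(x, y))} and Sp* F(x, y) = {S_n ∇Φ(x, y)ᵀ S_nᵀ L : L ∈ Sp* G(Φ(x, y))}, where for a nonsingular (2n)×(2n) matrix M and L ∈ Z_n, ML := {Mz : z ∈ L}, and S_n denotes the (2n)×(2n) block matrix [[0, −I], [I, 0]]. -/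
/-!
Near `z` the map `Φ` is a C¹ diffeomorphism, so at every graph point `z'` close to `z` the
tangent cone of `gph F` is the preimage of the tangent cone of `gph G` at `Φ z'` under the
invertible derivative `∇Φ(z')`. Graph points of `G` near `Φ z` are pulled back to graph points
of `F` near `z` by a local inverse of `Φ`, so it remains to see that `Lₖ → L` and `Aₖ → A`
(with `A` invertible) give `Aₖ⁻¹ Lₖ → A⁻¹ L`. In finite dimension, convergence of orthogonal
projections amounts to approximating every vector of `L` by vectors of `Lₖ` and every vector of
`L^⊥` by vectors of `Lₖ^⊥`; both transfer through `A`, since `(A⁻¹ L)^⊥ = Aᵀ L^⊥`. The same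
identity turns the formula for `Sp` into the one for `Sp*`.
-/

open Filter Topology Metric Set
open scoped InnerProductSpace RealInnerProductSpace ENNReal NNReal

noncomputable section

namespace SCD

variable {n : ℕ}

open scoped InnerProduct

theorem _root_.Filter.Tendsto.clm_apply {𝕜 V F α : Type*} [NontriviallyNormedField 𝕜]
    [NormedAddCommGroup V] [NormedSpace 𝕜 V] [NormedAddCommGroup F] [NormedSpace 𝕜 F]
    {l : Filter α} {f : α → V →L[𝕜] F} {g : V →L[𝕜] F} {x : α → V} {v : V}
    (hf : Tendsto f l (𝓝 g)) (hx : Tendsto x l (𝓝 v)) :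
    Tendsto (fun a => f a (x a)) l (𝓝 (g v)) :=
  (isBoundedBilinearMap_apply.continuous.tendsto _).comp (hf.prodMk_nhds hx)

theorem _root_.Filter.Tendsto.ringInverse {R α : Type*} [NormedRing R] [HasSummableGeomSeries R]
    {l : Filter α} {a : α → R} {b : R} (hb : IsUnit b) (h : Tendsto a l (𝓝 b)) :
    Tendsto (fun x => Ring.inverse (a x)) l (𝓝 (Ring.inverse b)) := by
  obtain ⟨u, rfl⟩ := hb
  exact (NormedRing.inverse_continuousAt u).tendsto.comp h

section RingInverse

variable {R M : Type*} [Ring R] [TopologicalSpace M] [AddCommGroup M] [Module R M]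
  {A : M →L[R] M}

theorem _root_.IsUnit.ringInverse_apply_apply (hA : IsUnit A) (x : M) : Ring.inverse A (A x) = x :=
  DFunLike.congr_fun (Ring.inverse_mul_cancel A hA) x

theorem _root_.IsUnit.apply_ringInverse_apply (hA : IsUnit A) (x : M) : A (Ring.inverse A x) = x :=
  DFunLike.congr_fun (Ring.mul_inverse_cancel A hA) x

theorem _root_.Submodule.finrank_comap_of_isUnit (hA : IsUnit A) (N : Submodule R M) :
    Module.finrank R (N.comap (A : M →ₗ[R] M)) = Module.finrank R N := by
  obtain ⟨u, rfl⟩ := hA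
  exact Submodule.comap_equiv_eq_map_symm (ContinuousLinearEquiv.ofUnit u).toLinearEquiv N ▸
    LinearEquiv.finrank_map_eq _ N

end RingInverse

section Adjoint

variable {𝕜 V : Type*} [RCLike 𝕜] [NormedAddCommGroup V] [InnerProductSpace 𝕜 V] [CompleteSpace V]

theorem _root_.Submodule.map_adjoint_le_orthogonal_comap (A : V →L[𝕜] V) (M : Submodule 𝕜 V) :
    Mᗮ.map (A† : V →ₗ[𝕜] V) ≤ (M.comap (A : V →ₗ[𝕜] V))ᗮ := by
  rintro _ ⟨u, hu, rfl⟩ v hv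
  rw [ContinuousLinearMap.coe_coe, ContinuousLinearMap.adjoint_inner_right]
  exact hu _ hv

theorem _root_.Submodule.orthogonal_comap_eq_map_adjoint {A : V →L[𝕜] V} (hA : IsUnit A)
    (M : Submodule 𝕜 V) :
    (M.comap (A : V →ₗ[𝕜] V))ᗮ = Mᗮ.map (A† : V →ₗ[𝕜] V) := by
  refine le_antisymm (fun x hx => ⟨((Ring.inverse A)†) x, fun m hm => ?_, ?_⟩)
    (M.map_adjoint_le_orthogonal_comap A)
  · rw [ContinuousLinearMap.adjoint_inner_right]
    exact hx _ (show A (Ring.inverse A m) ∈ M by rwa [hA.apply_ringInverse_apply])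
  · have hinv : (Ring.inverse A).comp A = ContinuousLinearMap.id 𝕜 V :=
      Ring.inverse_mul_cancel A hA
    show (A†) (((Ring.inverse A)†) x) = x
    rw [← ContinuousLinearMap.comp_apply, ← ContinuousLinearMap.adjoint_comp, hinv,
      ContinuousLinearMap.adjoint_id, ContinuousLinearMap.id_apply]

end Adjoint

section Projection

variable {𝕜 V : Type*} [RCLike 𝕜] [NormedAddCommGroup V] [InnerProductSpace 𝕜 V]
  [FiniteDimensional 𝕜 V]

theorem _root_.ContinuousLinearMap.tendsto_of_tendsto_apply {F α : Type*} [NormedAddCommGroup F]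
    [NormedSpace 𝕜 F] {l : Filter α} {f : α → V →L[𝕜] F} {g : V →L[𝕜] F}
    (h : ∀ v, Tendsto (fun a => f a v) l (𝓝 (g v))) : Tendsto f l (𝓝 g) := by
  -- evaluation on a basis is a linear homeomorphism onto `Fin (finrank 𝕜 V) → F`
  let e : (V →L[𝕜] F) ≃L[𝕜] (Fin (Module.finrank 𝕜 V) → F) :=
    ((ContinuousLinearEquiv.ofFinrankEq (Module.finrank_fin_fun 𝕜).symm).arrowCongr
      (1 : F ≃L[𝕜] F)).trans (ContinuousLinearEquiv.piRing _)
  rw [e.toHomeomorph.isInducing.tendsto_nhds_iff]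
  exact tendsto_pi_nhds.2 fun i => h _

theorem _root_.Submodule.tendsto_starProjection_of_approx {Lk : ℕ → Submodule 𝕜 V}
    {L : Submodule 𝕜 V}
    (hL : ∀ w ∈ L, ∃ wk : ℕ → V, (∀ᶠ k in atTop, wk k ∈ Lk k) ∧ Tendsto wk atTop (𝓝 w))
    (hLperp : ∀ w ∈ Lᗮ, ∃ wk : ℕ → V, (∀ᶠ k in atTop, wk k ∈ (Lk k)ᗮ) ∧ Tendsto wk atTop (𝓝 w)) :
    Tendsto (fun k => (Lk k).starProjection) atTop (𝓝 L.starProjection) := by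
  refine ContinuousLinearMap.tendsto_of_tendsto_apply fun x => ?_
  obtain ⟨uk, huk, hu⟩ := hL _ (L.starProjection_apply_mem x)
  obtain ⟨vk, hvk, hv⟩ := hLperp _ (L.sub_starProjection_mem_orthogonal x)
  -- `P_{Lk} x = P_{Lk} (x - uk - vk) + uk` once `uk ∈ Lk` and `vk ∈ Lkᗮ`
  have hres : Tendsto (fun k => ‖x - uk k - vk k‖) atTop (𝓝 0) := by
    simpa using ((tendsto_const_nhds (x := x)).sub hu).sub hv |>.norm
  have hsmall : Tendsto (fun k => (Lk k).starProjection (x - uk k - vk k)) atTop (𝓝 0) :=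
    squeeze_zero_norm (fun k => (Lk k).norm_starProjection_apply_le _) hres
  refine (zero_add (L.starProjection x) ▸ hsmall.add hu).congr' ?_
  filter_upwards [huk, hvk] with k hu hv
  rw [map_sub, map_sub, Submodule.starProjection_eq_self_iff.2 hu,
    (Lk k).starProjection_apply_eq_zero_iff.2 hv, sub_zero, sub_add_cancel]

variable {Lk : ℕ → Submodule 𝕜 V} {L : Submodule 𝕜 V}

theorem _root_.Submodule.exists_tendsto_mem_of_tendsto_starProjection
    (h : Tendsto (fun k => (Lk k).starProjection) atTop (𝓝 L.starProjection))
    {w : V} (hw : w ∈ L) :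
    ∃ wk : ℕ → V, (∀ᶠ k in atTop, wk k ∈ Lk k) ∧ Tendsto wk atTop (𝓝 w) :=
  ⟨fun k => (Lk k).starProjection w, .of_forall fun k => (Lk k).starProjection_apply_mem w, by
    simpa [Submodule.starProjection_eq_self_iff.2 hw] using
      h.clm_apply (tendsto_const_nhds (x := w))⟩

theorem _root_.Submodule.exists_tendsto_mem_orthogonal_of_tendsto_starProjection
    (h : Tendsto (fun k => (Lk k).starProjection) atTop (𝓝 L.starProjection))
    {w : V} (hw : w ∈ Lᗮ) :
    ∃ wk : ℕ → V, (∀ᶠ k in atTop, wk k ∈ (Lk k)ᗮ) ∧ Tendsto wk atTop (𝓝 w) := by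
  refine ⟨fun k => w - (Lk k).starProjection w,
    .of_forall fun k => (Lk k).sub_starProjection_mem_orthogonal w, ?_⟩
  simpa [L.starProjection_apply_eq_zero_iff.2 hw] using
    (tendsto_const_nhds (x := w)).sub (h.clm_apply (tendsto_const_nhds (x := w)))

theorem _root_.Submodule.tendsto_starProjection_comap [CompleteSpace V] {Mk : ℕ → Submodule 𝕜 V}
    {M : Submodule 𝕜 V} {Ak : ℕ → V →L[𝕜] V} {A : V →L[𝕜] V} (hA : IsUnit A)
    (hAk : Tendsto Ak atTop (𝓝 A))
    (hM : Tendsto (fun k => (Mk k).starProjection) atTop (𝓝 M.starProjection)) :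
    Tendsto (fun k => ((Mk k).comap (Ak k : V →ₗ[𝕜] V)).starProjection) atTop
      (𝓝 (M.comap (A : V →ₗ[𝕜] V)).starProjection) := by
  refine Submodule.tendsto_starProjection_of_approx (fun w hw => ?_) (fun w hw => ?_)
  · obtain ⟨mk, hmk, hm⟩ := Submodule.exists_tendsto_mem_of_tendsto_starProjection hM hw
    refine ⟨fun k => Ring.inverse (Ak k) (mk k), ?_, ?_⟩
    · filter_upwards [hmk, hAk.eventually (Units.isOpen.mem_nhds hA)] with k hm hu
      show Ak k (Ring.inverse (Ak k) (mk k)) ∈ Mk k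
      rwa [hu.apply_ringInverse_apply]
    · simpa only [ContinuousLinearMap.coe_coe, hA.ringInverse_apply_apply] using
        (hAk.ringInverse hA).clm_apply hm
  · rw [Submodule.orthogonal_comap_eq_map_adjoint hA] at hw
    obtain ⟨u, hu, rfl⟩ := hw
    obtain ⟨uk, huk, hu⟩ := Submodule.exists_tendsto_mem_orthogonal_of_tendsto_starProjection hM hu
    refine ⟨fun k => ((Ak k)†) (uk k),
      huk.mono fun k hk => (Mk k).map_adjoint_le_orthogonal_comap (Ak k) ⟨_, hk, rfl⟩, ?_⟩
    exact ((ContinuousLinearMap.adjoint.continuous.tendsto A).comp hAk).clm_apply hu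

end Projection

-- a shortcut: without it, instance search on `E2 n →L[ℝ] E2 n` as a complete normed ring times out
instance : ContinuousSMul ℝ (E2 n) := inferInstance

theorem tendsto_dZ_zero_iff {Lk : ℕ → Submodule ℝ (E2 n)} {L : Submodule ℝ (E2 n)} :
    Tendsto (fun k => dZ (Lk k) L) atTop (𝓝 0) ↔
      Tendsto (fun k => (Lk k).starProjection) atTop (𝓝 L.starProjection) :=
  tendsto_iff_norm_sub_tendsto_zero.symm

section TangentCone

variable {H H' : Type*} [NormedAddCommGroup H] [NormedSpace ℝ H] [NormedAddCommGroup H']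
  [NormedSpace ℝ H']

theorem _root_.HasFDerivAt.tendsto_inv_smul_sub {f : H → H'} {f' : H →L[ℝ] H'} {x : H}
    (hf : HasFDerivAt f f' x) {α : Type*} {l : Filter α} {t : α → ℝ} {w : α → H} {v : H}
    (ht : ∀ a, t a ≠ 0) (ht0 : Tendsto t l (𝓝 0)) (hw : Tendsto w l (𝓝 v)) :
    Tendsto (fun a => (t a)⁻¹ • (f (x + t a • w a) - f x)) l (𝓝 (f' v)) :=
  hf.hasFDerivWithinAt.lim (s := univ) (by simpa using ht0.smul hw) (.of_forall fun _ => trivial)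
    (hw.congr fun a => (inv_smul_smul₀ (ht a) (w a)).symm)

theorem mem_tcone_of_eventually {A : Set H} {x v : H} {t : ℕ → ℝ} {w : ℕ → H}
    (ht : ∀ k, 0 < t k) (ht0 : Tendsto t atTop (𝓝 0)) (hw : Tendsto w atTop (𝓝 v))
    (hA : ∀ᶠ k in atTop, x + t k • w k ∈ A) : v ∈ tcone A x := by
  obtain ⟨N, hN⟩ := eventually_atTop.1 hA
  exact ⟨fun k => t (k + N), fun k => w (k + N), fun k => ht _,
    ht0.comp (tendsto_add_atTop_nat N), hw.comp (tendsto_add_atTop_nat N),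
    fun k => hN _ (Nat.le_add_left N k)⟩

theorem tcone_preimage_subset {f : H → H'} {f' : H →L[ℝ] H'} {x : H} (hf : HasFDerivAt f f' x)
    (A : Set H') : tcone (f ⁻¹' A) x ⊆ f' ⁻¹' tcone A (f x) := by
  rintro v ⟨t, w, ht, ht0, hw, hA⟩
  refine ⟨t, fun k => (t k)⁻¹ • (f (x + t k • w k) - f x), ht, ht0,
    hf.tendsto_inv_smul_sub (fun k => (ht k).ne') ht0 hw, fun k => ?_⟩
  rw [smul_inv_smul₀ (ht k).ne', add_sub_cancel]
  exact hA k

theorem tcone_preimage [CompleteSpace H] [CompleteSpace H'] {f : H → H'} {e : H ≃L[ℝ] H'}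
    {x : H} (hf : HasStrictFDerivAt f (e : H →L[ℝ] H') x) (A : Set H') :
    tcone (f ⁻¹' A) x = e ⁻¹' tcone A (f x) := by
  refine (tcone_preimage_subset hf.hasFDerivAt A).antisymm fun v hv => ?_
  obtain ⟨t, w, ht, ht0, hw, hA⟩ := hv
  have hy : Tendsto (fun k => f x + t k • w k) atTop (𝓝 (f x)) := by
    simpa using tendsto_const_nhds.add (ht0.smul hw)
  have hlim := hf.to_localInverse.hasFDerivAt.tendsto_inv_smul_sub (fun k => (ht k).ne') ht0 hw
  simp only [hf.localInverse_apply_image, ContinuousLinearEquiv.coe_coe,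
    ContinuousLinearEquiv.symm_apply_apply] at hlim
  refine mem_tcone_of_eventually ht ht0 hlim ?_
  filter_upwards [hy.eventually hf.eventually_right_inverse] with k hk
  rw [smul_inv_smul₀ (ht k).ne', add_sub_cancel, mem_preimage, hk]
  exact hA k

end TangentCone

theorem mem_Sp_of_eventually {F : E n → Set (E n)} {z : E2 n} {L : Submodule ℝ (E2 n)}
    {zk : ℕ → E2 n} {Lk : ℕ → Submodule ℝ (E2 n)} (hL : Module.finrank ℝ L = n)
    (hk : ∀ᶠ k in atTop, zk k ∈ gph F ∧ Module.finrank ℝ (Lk k) = n ∧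
      (Lk k : Set (E2 n)) = tcone (gph F) (zk k))
    (hz : Tendsto zk atTop (𝓝 z)) (hd : Tendsto (fun k => dZ (Lk k) L) atTop (𝓝 0)) :
    L ∈ Sp F z := by
  obtain ⟨N, hN⟩ := eventually_atTop.1 hk
  exact ⟨hL, fun k => zk (k + N), fun k => Lk (k + N), fun k => hN _ (Nat.le_add_left N k),
    hz.comp (tendsto_add_atTop_nat N), hd.comp (tendsto_add_atTop_nat N)⟩

theorem comap_mem_Sp {F : E n → Set (E n)} {z : E2 n} {zk : ℕ → E2 n}
    {M : Submodule ℝ (E2 n)} {Mk : ℕ → Submodule ℝ (E2 n)} {C : E2 n →L[ℝ] E2 n}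
    {Ck : ℕ → E2 n →L[ℝ] E2 n} (hM : Module.finrank ℝ M = n)
    (hMk : ∀ k, Module.finrank ℝ (Mk k) = n) (hd : Tendsto (fun k => dZ (Mk k) M) atTop (𝓝 0))
    (hC : IsUnit C) (hCk : Tendsto Ck atTop (𝓝 C)) (hz : Tendsto zk atTop (𝓝 z))
    (htan : ∀ᶠ k in atTop, zk k ∈ gph F ∧ tcone (gph F) (zk k) = Ck k ⁻¹' Mk k) :
    M.comap (C : E2 n →ₗ[ℝ] E2 n) ∈ Sp F z := by
  refine mem_Sp_of_eventually (by rw [Submodule.finrank_comap_of_isUnit hC, hM]) ?_ hz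
    (tendsto_dZ_zero_iff.2 (Submodule.tendsto_starProjection_comap hC hCk
      (tendsto_dZ_zero_iff.1 hd)))
  filter_upwards [htan, hCk.eventually (Units.isOpen.mem_nhds hC)] with k ⟨hzk, htk⟩ hu
  exact ⟨hzk, by rw [Submodule.finrank_comap_of_isUnit hu, hMk], htk.symm⟩

section Transformation

variable {F G : E n → Set (E n)} {Φ : E2 n → E2 n}

theorem tcone_gph_eq_preimage (hgraph : gph F = {z | Φ z ∈ gph G}) {z : E2 n}
    (hΦ : ContDiffAt ℝ 1 Φ z) (hu : IsUnit (fderiv ℝ Φ z)) :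
    tcone (gph F) z = fderiv ℝ Φ z ⁻¹' tcone (gph G) (Φ z) := by
  rw [hgraph]
  exact tcone_preimage (e := ContinuousLinearEquiv.ofUnit hu.unit)
    (hΦ.hasStrictFDerivAt one_ne_zero) _

theorem eventually_contDiffAt_isUnit_fderiv {z : E2 n} (hΦ : ContDiffAt ℝ 1 Φ z)
    (hu : IsUnit (fderiv ℝ Φ z)) :
    ∀ᶠ z' in 𝓝 z, ContDiffAt ℝ 1 Φ z' ∧ IsUnit (fderiv ℝ Φ z') :=
  (hΦ.eventually (by simp)).and
    ((hΦ.continuousAt_fderiv one_ne_zero).eventually (Units.isOpen.mem_nhds hu))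

theorem comap_fderiv_mem_Sp (hgraph : gph F = {z | Φ z ∈ gph G}) {z : E2 n}
    (hΦ : ContDiffAt ℝ 1 Φ z) (hu : IsUnit (fderiv ℝ Φ z)) {M : Submodule ℝ (E2 n)}
    (hM : M ∈ Sp G (Φ z)) : M.comap (fderiv ℝ Φ z : E2 n →ₗ[ℝ] E2 n) ∈ Sp F z := by
  obtain ⟨hM, qk, Mk, hMk, hq, hd⟩ := hM
  have hstrict : HasStrictFDerivAt Φ (ContinuousLinearEquiv.ofUnit hu.unit : E2 n →L[ℝ] E2 n) z :=
    hΦ.hasStrictFDerivAt one_ne_zero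
  obtain ⟨g, hg, hgz, hΦg⟩ : ∃ g : E2 n → E2 n, ContinuousAt g (Φ z) ∧ g (Φ z) = z ∧
      ∀ᶠ q in 𝓝 (Φ z), Φ (g q) = q :=
    ⟨_, hstrict.localInverse_continuousAt, hstrict.localInverse_apply_image,
      hstrict.eventually_right_inverse⟩
  have hz : Tendsto (fun k => g (qk k)) atTop (𝓝 z) := hgz ▸ hg.tendsto.comp hq
  refine comap_mem_Sp (Ck := fun k => fderiv ℝ Φ (g (qk k))) hM (fun k => (hMk k).2.1) hd hu
    ((hΦ.continuousAt_fderiv one_ne_zero).tendsto.comp hz) hz ?_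
  filter_upwards [hq.eventually hΦg, hz.eventually (eventually_contDiffAt_isUnit_fderiv hΦ hu)]
    with k hΦk ⟨hΦ', hu'⟩
  refine ⟨?_, ?_⟩
  · rw [hgraph, mem_ofPred_eq, hΦk]
    exact (hMk k).1
  · rw [tcone_gph_eq_preimage hgraph hΦ' hu', hΦk, (hMk k).2.2]

theorem exists_eq_comap_fderiv_of_mem_Sp (hgraph : gph F = {z | Φ z ∈ gph G}) {z : E2 n}
    (hΦ : ContDiffAt ℝ 1 Φ z) (hu : IsUnit (fderiv ℝ Φ z)) {L : Submodule ℝ (E2 n)}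
    (hL : L ∈ Sp F z) :
    ∃ M ∈ Sp G (Φ z), L = M.comap (fderiv ℝ Φ z : E2 n →ₗ[ℝ] E2 n) := by
  obtain ⟨hL, zk, Lk, hLk, hz, hd⟩ := hL
  -- the roles of `F` and `G` swap, with the inverse derivatives as transition maps
  refine ⟨_, comap_mem_Sp hL (fun k => (hLk k).2.1) hd hu.ringInverse
    (((hΦ.continuousAt_fderiv one_ne_zero).tendsto.comp hz).ringInverse hu)
    (hΦ.continuousAt.tendsto.comp hz) ?_, ?_⟩
  · filter_upwards [hz.eventually (eventually_contDiffAt_isUnit_fderiv hΦ hu)]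
      with k ⟨hΦ', hu'⟩
    refine ⟨?_, ?_⟩
    · have := (hLk k).1
      rwa [hgraph] at this
    · ext v
      rw [(hLk k).2.2, tcone_gph_eq_preimage hgraph hΦ' hu']
      simp only [Function.comp_apply, mem_preimage, hu'.apply_ringInverse_apply]
  · ext v
    simp only [Submodule.mem_comap, ContinuousLinearMap.coe_coe, hu.ringInverse_apply_apply]

theorem Sp_eq_comap_fderiv (hgraph : gph F = {z | Φ z ∈ gph G}) {z : E2 n}
    (hΦ : ContDiffAt ℝ 1 Φ z) (hu : IsUnit (fderiv ℝ Φ z)) :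
    Sp F z = {L' | ∃ L ∈ Sp G (Φ z), L' = L.comap (fderiv ℝ Φ z : E2 n →ₗ[ℝ] E2 n)} := by
  ext L
  constructor
  · exact exists_eq_comap_fderiv_of_mem_Sp hgraph hΦ hu
  · rintro ⟨M, hM, rfl⟩
    exact comap_fderiv_mem_Sp hgraph hΦ hu hM

end Transformation

theorem adjS_comap {A : E2 n →L[ℝ] E2 n} (hA : IsUnit A) (M : Submodule ℝ (E2 n)) :
    adjS (M.comap (A : E2 n →ₗ[ℝ] E2 n)) =
      (adjS M).map ((Sneg n).toLinearMap ∘ₗ (A†).toLinearMap ∘ₗ (Sneg n).symm.toLinearMap) := by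
  rw [adjS, adjS, Submodule.orthogonal_comap_eq_map_adjoint hA, ← Submodule.map_comp,
    ← Submodule.map_comp]
  congr 1
  ext v
  simp

theorem stmt8_general (n : ℕ) (G F : E n → Set (E n)) (Φ : E2 n → E2 n)
    (hgraph : gph F = {z | Φ z ∈ gph G}) (z : E2 n)
    (hC1 : ∃ W : Set (E2 n), IsOpen W ∧ z ∈ W ∧ ContDiffOn ℝ 1 Φ W)
    (hinv : Function.Bijective (fderiv ℝ Φ z)) :
    Sp F z = {L' | ∃ L ∈ Sp G (Φ z),
        L' = Submodule.comap ((fderiv ℝ Φ z) : E2 n →ₗ[ℝ] E2 n) L} ∧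
    SpStar F z = {L' | ∃ L ∈ SpStar G (Φ z),
        L' = Submodule.map ((Sneg n).toLinearMap ∘ₗ
          (ContinuousLinearMap.adjoint (fderiv ℝ Φ z)).toLinearMap ∘ₗ
          (Sneg n).symm.toLinearMap) L} := by
  obtain ⟨W, hW, hzW, hΦW⟩ := hC1
  have hΦ : ContDiffAt ℝ 1 Φ z := hΦW.contDiffAt (hW.mem_nhds hzW)
  have hu : IsUnit (fderiv ℝ Φ z) := ContinuousLinearMap.isUnit_iff_bijective.2 hinv
  have hSp := Sp_eq_comap_fderiv hgraph hΦ hu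
  refine ⟨hSp, Set.ext fun L' => ⟨?_, ?_⟩⟩
  · rintro ⟨L, hL, rfl⟩
    obtain ⟨M, hM, rfl⟩ := hSp ▸ hL
    exact ⟨adjS M, ⟨M, hM, rfl⟩, adjS_comap hu M⟩
  · rintro ⟨_, ⟨M, hM, rfl⟩, rfl⟩
    exact ⟨_, hSp ▸ ⟨M, hM, rfl⟩, (adjS_comap hu M).symm⟩

theorem stmt8 (n : ℕ) (G F : E n → Set (E n)) (Φ : E2 n → E2 n)
    (hgraph : gph F = {z | Φ z ∈ gph G}) (z : E2 n) (hz : z ∈ gph F)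
    (hC1 : ∃ W : Set (E2 n), IsOpen W ∧ z ∈ W ∧ ContDiffOn ℝ 1 Φ W)
    (hinv : Function.Bijective (fderiv ℝ Φ z)) :
    Sp F z = {L' | ∃ L ∈ Sp G (Φ z),
        L' = Submodule.comap ((fderiv ℝ Φ z) : E2 n →ₗ[ℝ] E2 n) L} ∧
    SpStar F z = {L' | ∃ L ∈ SpStar G (Φ z),
        L' = Submodule.map ((Sneg n).toLinearMap ∘ₗ
          (ContinuousLinearMap.adjoint (fderiv ℝ Φ z)).toLinearMap ∘ₗ
          (Sneg n).symm.toLinearMap) L} :=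
  stmt8_general n G F Φ hgraph z hC1 hinv

end SCD
end
end
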